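/- arXiv:2406.00774 — 2 statements merged into one kernel-verified Lean document; each statement's English description precedes it below -/
import Mathlib

section
/- Let p ∈ (1,∞), Λ > 0, M > 0 and μ ∈ (0,1]. There exists a constant C > 0, depending only on p, Λ, M and μ, with the following property: whenever A ∈ ℂ^{d×d}, b, c ∈ ℂ^d and V ≥ 0 real satisfy |⟨Aξ,σ⟩| ≤ Λ|ξ||σ| for all ξ, σ ∈ ℂ^d, |b − c| ≤ M√V, and Γ_p^{(A,b,c,V)}(ξ) ≥ μ(|ξ|² + V) for all ξ ∈ ℂ^d, then |b| ≤ C√V and |c| ≤ C√V. -/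
open scoped ComplexConjugate

/-- The ℝ-linear operator `𝒥_p ξ = (p/2)(ξ + (1 − 2/p)·conj ξ)` on `ℂ^d`. -/
noncomputable def Jmap (p : ℝ) {d : ℕ} (ξ : EuclideanSpace ℂ (Fin d)) :
    EuclideanSpace ℂ (Fin d) :=
  WithLp.toLp 2 (fun i => (p / 2 : ℂ) * (ξ i + ((1 - 2 / p : ℝ) : ℂ) * conj (ξ i)))

/-- The Hermitian inner product `⟨x,y⟩ = ∑ x i * conj (y i)`, linear in the first variable. -/
noncomputable def hip {d : ℕ} (x y : EuclideanSpace ℂ (Fin d)) : ℂ :=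
  @inner ℂ _ _ y x

/-- A matrix acting on `ℂ^d`. -/
noncomputable def mulVecE {d : ℕ} (A : Matrix (Fin d) (Fin d) ℂ)
    (ξ : EuclideanSpace ℂ (Fin d)) : EuclideanSpace ℂ (Fin d) :=
  WithLp.toLp 2 (fun i => A.mulVec (fun j => ξ j) i)

/-- `Γ_p^{(A,b,c,V)}(ξ) = Re⟨Aξ, 𝒥_p ξ⟩ + Re⟨b + 𝒥_p c, ξ⟩ + V`. -/
noncomputable def Gamma (p : ℝ) {d : ℕ} (A : Matrix (Fin d) (Fin d) ℂ)
    (b c : EuclideanSpace ℂ (Fin d)) (V : ℝ) (ξ : EuclideanSpace ℂ (Fin d)) : ℝ :=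
  (hip (mulVecE A ξ) (Jmap p ξ)).re + (hip (b + Jmap p c) ξ).re + V

/-!
Since `Γ ≥ 0` and `Re⟨Aξ, 𝒥_p ξ⟩ ≤ Λ p |ξ|²`, the functional `ξ ↦ Re⟨b + 𝒥_p c, ξ⟩` is bounded
below by `-(Λ p |ξ|² + V)`; testing it along the ray through `-(b + 𝒥_p c)` gives
`|b + 𝒥_p c| ≤ (Λ p + 1) √V`. Writing `𝒥_p ξ = (p/2) ξ + (p/2 - 1) conj ξ` shows that `1 + 𝒥_p` is
bounded below by `1` for `p ≥ 1`, so `|c| ≤ |c + 𝒥_p c| ≤ |b + 𝒥_p c| + |b - c|`, and finally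
`|b| ≤ |b - c| + |c|`.
-/
lemma le_of_forall_pos_mul_le_sq_add {a s x : ℝ} (ha : 0 ≤ a) (hs : 0 ≤ s)
    (h : ∀ t > 0, t * x ≤ a * t ^ 2 + s ^ 2) : x ≤ (a + 1) * s := by
  refine le_of_forall_pos_lt_add fun ε hε => ?_
  set t := s + ε / (a + 1)
  have hε' : 0 < ε / (a + 1) := by positivity
  have hx := h t (by positivity)
  have hta : t * x ≤ t * (a * t + s) := by nlinarith
  have : x ≤ a * t + s := le_of_mul_le_mul_left hta (by positivity)
  have : a * (ε / (a + 1)) < ε := by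
    rw [mul_div_assoc', div_lt_iff₀ (by positivity)]; linarith
  nlinarith

open RCLike in
lemma norm_le_of_forall_nonneg_re_inner_add {𝕜 E : Type*} [RCLike 𝕜] [NormedAddCommGroup E]
    [InnerProductSpace 𝕜 E] {w : E} {a s : ℝ} (ha : 0 ≤ a) (hs : 0 ≤ s)
    (h : ∀ ξ : E, 0 ≤ re (inner 𝕜 ξ w) + a * ‖ξ‖ ^ 2 + s ^ 2) : ‖w‖ ≤ (a + 1) * s := by
  rcases eq_or_ne w 0 with rfl | hw
  · rw [norm_zero]; positivity
  have hw : 0 < ‖w‖ := norm_pos_iff.mpr hw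
  refine le_of_forall_pos_mul_le_sq_add ha hs fun t ht => ?_
  have hξ := h (((-(t / ‖w‖) : ℝ) : 𝕜) • w)
  rw [inner_smul_left, conj_ofReal, re_ofReal_mul, inner_self_eq_norm_sq, norm_smul,
    norm_ofReal, abs_neg, abs_of_pos (by positivity), div_mul_cancel₀ _ hw.ne'] at hξ
  have : t / ‖w‖ * ‖w‖ ^ 2 = t * ‖w‖ := by field_simp
  linarith

noncomputable def conjE (d : ℕ) : EuclideanSpace ℂ (Fin d) ≃ₗᵢ[ℝ] EuclideanSpace ℂ (Fin d) :=
  LinearIsometryEquiv.piLpCongrRight 2 fun _ => Complex.conjLIE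

lemma Jmap_eq {p : ℝ} (hp : p ≠ 0) {d : ℕ} (ξ : EuclideanSpace ℂ (Fin d)) :
    Jmap p ξ = (p / 2) • ξ + (p / 2 - 1) • conjE d ξ := by
  ext i
  simp only [Jmap, conjE, LinearIsometryEquiv.piLpCongrRight_apply, PiLp.add_apply,
    PiLp.smul_apply, PiLp.toLp_apply, Complex.conjLIE_apply, Complex.real_smul]
  have : (p : ℂ) ≠ 0 := by exact_mod_cast hp
  push_cast
  field_simp

lemma norm_Jmap_le {p : ℝ} (hp : 1 ≤ p) {d : ℕ} (ξ : EuclideanSpace ℂ (Fin d)) :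
    ‖Jmap p ξ‖ ≤ p * ‖ξ‖ := by
  have h : |p / 2 - 1| ≤ p / 2 := abs_le.mpr ⟨by linarith, by linarith⟩
  calc ‖Jmap p ξ‖ ≤ |p / 2| * ‖ξ‖ + |p / 2 - 1| * ‖ξ‖ := by
        rw [Jmap_eq (by positivity)]
        simpa only [norm_smul, Real.norm_eq_abs, LinearIsometryEquiv.norm_map]
          using norm_add_le ((p / 2) • ξ) ((p / 2 - 1) • conjE d ξ)
    _ ≤ p * ‖ξ‖ := by rw [abs_of_pos (by positivity)]; nlinarith [norm_nonneg ξ]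

lemma norm_le_norm_add_Jmap {p : ℝ} (hp : 1 ≤ p) {d : ℕ} (ξ : EuclideanSpace ℂ (Fin d)) :
    ‖ξ‖ ≤ ‖ξ + Jmap p ξ‖ := by
  have h : |p / 2 - 1| ≤ p / 2 := abs_le.mpr ⟨by linarith, by linarith⟩
  have hsplit : ξ + Jmap p ξ = (1 + p / 2) • ξ - (1 - p / 2) • conjE d ξ := by
    rw [Jmap_eq (by positivity)]; module
  calc ‖ξ‖ ≤ (1 + p / 2) * ‖ξ‖ - |1 - p / 2| * ‖ξ‖ := by
        rw [abs_sub_comm]; nlinarith [norm_nonneg ξ]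
    _ ≤ ‖ξ + Jmap p ξ‖ := by
        rw [hsplit]
        simpa only [norm_smul, Real.norm_eq_abs, LinearIsometryEquiv.norm_map,
          abs_of_pos (by positivity : (0 : ℝ) < 1 + p / 2)]
          using norm_sub_norm_le ((1 + p / 2) • ξ) ((1 - p / 2) • conjE d ξ)

lemma re_hip_mulVecE_Jmap_le {p Λ : ℝ} (hp : 1 ≤ p) (hΛ : 0 ≤ Λ) {d : ℕ}
    {A : Matrix (Fin d) (Fin d) ℂ}
    (hA : ∀ ξ σ : EuclideanSpace ℂ (Fin d), ‖hip (mulVecE A ξ) σ‖ ≤ Λ * ‖ξ‖ * ‖σ‖)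
    (ξ : EuclideanSpace ℂ (Fin d)) :
    (hip (mulVecE A ξ) (Jmap p ξ)).re ≤ Λ * p * ‖ξ‖ ^ 2 :=
  calc (hip (mulVecE A ξ) (Jmap p ξ)).re ≤ Λ * ‖ξ‖ * ‖Jmap p ξ‖ :=
        (Complex.re_le_norm _).trans (hA ξ _)
    _ ≤ Λ * ‖ξ‖ * (p * ‖ξ‖) := by gcongr; exact norm_Jmap_le hp ξ
    _ = Λ * p * ‖ξ‖ ^ 2 := by ring

theorem stmt4_general (p Λ M μ : ℝ) (hp : 1 < p)
    (hΛ : 0 < Λ) (hM : 0 < M) (hμ0 : 0 < μ) :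
    ∃ C : ℝ, 0 < C ∧
      ∀ (d : ℕ), 1 ≤ d →
        ∀ (A : Matrix (Fin d) (Fin d) ℂ) (b c : EuclideanSpace ℂ (Fin d)) (V : ℝ),
          0 ≤ V →
          (∀ ξ σ : EuclideanSpace ℂ (Fin d),
            ‖hip (mulVecE A ξ) σ‖ ≤ Λ * ‖ξ‖ * ‖σ‖) →
          ‖b - c‖ ≤ M * Real.sqrt V →
          (∀ ξ : EuclideanSpace ℂ (Fin d), μ * (‖ξ‖ ^ 2 + V) ≤ Gamma p A b c V ξ) →
          ‖b‖ ≤ C * Real.sqrt V ∧ ‖c‖ ≤ C * Real.sqrt V := by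
  refine ⟨Λ * p + 1 + 2 * M, by positivity, fun d _ A b c V hV hA hbc hΓ => ?_⟩
  have hsq : Real.sqrt V ^ 2 = V := Real.sq_sqrt hV
  have hw : ‖b + Jmap p c‖ ≤ (Λ * p + 1) * Real.sqrt V := by
    refine norm_le_of_forall_nonneg_re_inner_add (𝕜 := ℂ) (by positivity)
      (Real.sqrt_nonneg V) fun ξ => ?_
    have hΓξ : 0 ≤ Gamma p A b c V ξ := le_trans (by positivity) (hΓ ξ)
    have := re_hip_mulVecE_Jmap_le hp.le hΛ.le hA ξ
    rw [Gamma] at hΓξ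
    show 0 ≤ (hip (b + Jmap p c) ξ).re + Λ * p * ‖ξ‖ ^ 2 + Real.sqrt V ^ 2
    linarith
  have hc : ‖c‖ ≤ (Λ * p + 1 + M) * Real.sqrt V :=
    calc ‖c‖ ≤ ‖c + Jmap p c‖ := norm_le_norm_add_Jmap hp.le c
      _ = ‖(b + Jmap p c) - (b - c)‖ := by congr 1; abel
      _ ≤ ‖b + Jmap p c‖ + ‖b - c‖ := norm_sub_le _ _
      _ ≤ (Λ * p + 1 + M) * Real.sqrt V := by linarith
  have hb : ‖b‖ ≤ ‖b - c‖ + ‖c‖ := norm_le_norm_sub_add b c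
  constructor <;> nlinarith [Real.sqrt_nonneg V]

theorem stmt4 (p Λ M μ : ℝ) (hp : 1 < p)
    (hΛ : 0 < Λ) (hM : 0 < M) (hμ0 : 0 < μ) (hμ1 : μ ≤ 1) :
    ∃ C : ℝ, 0 < C ∧
      ∀ (d : ℕ), 1 ≤ d →
        ∀ (A : Matrix (Fin d) (Fin d) ℂ) (b c : EuclideanSpace ℂ (Fin d)) (V : ℝ),
          0 ≤ V →
          (∀ ξ σ : EuclideanSpace ℂ (Fin d),
            ‖hip (mulVecE A ξ) σ‖ ≤ Λ * ‖ξ‖ * ‖σ‖) →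
          ‖b - c‖ ≤ M * Real.sqrt V →
          (∀ ξ : EuclideanSpace ℂ (Fin d), μ * (‖ξ‖ ^ 2 + V) ≤ Gamma p A b c V ξ) →
          ‖b‖ ≤ C * Real.sqrt V ∧ ‖c‖ ≤ C * Real.sqrt V :=
  stmt4_general p Λ M μ hp hΛ hM hμ0
end

section
/- Let p ∈ (1,∞), q = p/(p−1), A ∈ ℂ^{d×d}, b, c ∈ ℂ^d and V ≥ 0 a real number. Suppose Γ_p^{(A,b,c,V)}(ξ) ≥ 0 for all ξ ∈ ℂ^d. Then for all α, β ∈ ℝ^d: (4/(pq))⟨(Re A)α, α⟩ + ⟨(Re A)β, β⟩ + 2⟨((1/p)(Im A) − (1/q)(Im A)ᵀ)α, β⟩ + ⟨Im(b+c), β⟩ + 2⟨Re((1/p)b + (1/q)c), α⟩ + V ≥ 0, where Re A and Im A are the entrywise real and imaginary parts of A (real d×d matrices), (Im A)ᵀ is the transpose, and ⟨·,·⟩ on the left-hand side is the Euclidean inner product on ℝ^d. -/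
open scoped ComplexConjugate

/-!
Write `ξ = x + i y` with `x, y` real. Then `𝒥_p ξ = (p - 1) x + i y`, so `Γ_p(ξ)` is an explicit
real quadratic polynomial in `(x, y)`. The claimed expression is exactly its value at
`x = (2/p) α`, `y = β`, since `(p - 1)(2/p)² = 4/(pq)` and `(p - 1)/p = 1/q`.
-/

noncomputable def ofReIm {d : ℕ} (x y : Fin d → ℝ) : EuclideanSpace ℂ (Fin d) :=
  WithLp.toLp 2 (fun i => (x i : ℂ) + (y i : ℂ) * Complex.I)

section ofReIm

open Matrix

variable {d : ℕ} (x y : Fin d → ℝ)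

@[simp] lemma ofReIm_apply_re (i : Fin d) : (ofReIm x y i).re = x i := by simp [ofReIm]

@[simp] lemma ofReIm_apply_im (i : Fin d) : (ofReIm x y i).im = y i := by simp [ofReIm]

lemma re_comp_ofReIm : (fun i => (ofReIm x y i).re) = x := funext (ofReIm_apply_re x y)

lemma im_comp_ofReIm : (fun i => (ofReIm x y i).im) = y := funext (ofReIm_apply_im x y)

lemma re_hip_ofReIm (u : EuclideanSpace ℂ (Fin d)) :
    (hip u (ofReIm x y)).re = (fun i => (u i).re) ⬝ᵥ x + (fun i => (u i).im) ⬝ᵥ y := by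
  simp [hip, PiLp.inner_apply, dotProduct, Finset.sum_add_distrib]

lemma mulVecE_ofReIm (A : Matrix (Fin d) (Fin d) ℂ) :
    mulVecE A (ofReIm x y) =
      ofReIm (A.map Complex.re *ᵥ x - A.map Complex.im *ᵥ y)
        (A.map Complex.im *ᵥ x + A.map Complex.re *ᵥ y) := by
  ext i : 1
  apply Complex.ext <;>
    simp [mulVecE, mulVec, dotProduct, Complex.mul_re, Complex.mul_im, ofReIm,
      Finset.sum_add_distrib, add_comm]

end ofReIm

section Jmap

open Matrix

variable {p : ℝ} {d : ℕ}

lemma Jmap_apply_re (hp : p ≠ 0) (ξ : EuclideanSpace ℂ (Fin d)) (i : Fin d) :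
    (Jmap p ξ i).re = (p - 1) * (ξ i).re := by
  simp only [Jmap, Complex.mul_re, Complex.mul_im, Complex.add_re, Complex.add_im, Complex.conj_re,
    Complex.conj_im, Complex.ofReal_re, Complex.ofReal_im, Complex.div_ofNat_re, Complex.div_ofNat_im]
  field_simp
  ring

lemma Jmap_apply_im (hp : p ≠ 0) (ξ : EuclideanSpace ℂ (Fin d)) (i : Fin d) :
    (Jmap p ξ i).im = (ξ i).im := by
  simp only [Jmap, Complex.mul_re, Complex.mul_im, Complex.add_re, Complex.add_im, Complex.conj_re,
    Complex.conj_im, Complex.ofReal_re, Complex.ofReal_im, Complex.div_ofNat_re, Complex.div_ofNat_im]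
  field_simp
  ring

lemma Jmap_ofReIm (hp : p ≠ 0) (x y : Fin d → ℝ) :
    Jmap p (ofReIm x y) = ofReIm ((p - 1) • x) y := by
  ext i : 1
  apply Complex.ext <;> simp [Jmap_apply_re hp, Jmap_apply_im hp]

lemma Gamma_ofReIm (hp : p ≠ 0) (A : Matrix (Fin d) (Fin d) ℂ)
    (b c : EuclideanSpace ℂ (Fin d)) (V : ℝ) (x y : Fin d → ℝ) :
    Gamma p A b c V (ofReIm x y) =
      (p - 1) * (A.map Complex.re *ᵥ x ⬝ᵥ x) + A.map Complex.re *ᵥ y ⬝ᵥ y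
        + (A.map Complex.im *ᵥ x ⬝ᵥ y - (p - 1) * (A.map Complex.im *ᵥ y ⬝ᵥ x))
        + (fun i => (b i).re + (p - 1) * (c i).re) ⬝ᵥ x + (fun i => (b i + c i).im) ⬝ᵥ y
        + V := by
  rw [Gamma, Jmap_ofReIm hp, mulVecE_ofReIm, re_hip_ofReIm, re_hip_ofReIm, re_comp_ofReIm,
    im_comp_ofReIm]
  simp only [PiLp.add_apply, Complex.add_re, Complex.add_im, Jmap_apply_re hp, Jmap_apply_im hp,
    sub_dotProduct, add_dotProduct, dotProduct_smul, smul_eq_mul]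
  ring

end Jmap

theorem stmt13_general (d : ℕ) (p q : ℝ) (hp : 1 < p) (hq : q = p / (p - 1))
    (A : Matrix (Fin d) (Fin d) ℂ) (b c : EuclideanSpace ℂ (Fin d))
    (V : ℝ)
    (hΓ : ∀ ξ : EuclideanSpace ℂ (Fin d), 0 ≤ Gamma p A b c V ξ) :
    ∀ α β : Fin d → ℝ,
      0 ≤ (4 / (p * q)) * dotProduct ((A.map Complex.re).mulVec α) α
          + dotProduct ((A.map Complex.re).mulVec β) β
          + 2 * dotProduct
              (((1 / p) • (A.map Complex.im) - (1 / q) • (A.map Complex.im).transpose).mulVec α) β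
          + dotProduct (fun i => (b i + c i).im) β
          + 2 * dotProduct (fun i => ((1 / p : ℂ) * b i + (1 / q : ℂ) * c i).re) α
          + V := by
  intro α β
  have hp0 : p ≠ 0 := by positivity
  subst hq
  have htranspose : (A.map Complex.im).transpose.mulVec α ⬝ᵥ β
      = (A.map Complex.im).mulVec β ⬝ᵥ α := by
    rw [dotProduct_comm, Matrix.dotProduct_transpose_mulVec, dotProduct_comm]
  have hlinear : (fun i => ((1 / p : ℂ) * b i + (1 / (p / (p - 1) : ℝ) : ℂ) * c i).re)
      = (1 / p) • fun i => (b i).re + (p - 1) * (c i).re := by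
    ext i
    simp only [Complex.add_re, ← Complex.ofReal_one, ← Complex.ofReal_div, Complex.re_ofReal_mul,
      Pi.smul_apply, smul_eq_mul]
    field_simp
  convert hΓ (ofReIm ((2 / p) • α) β) using 1
  rw [Gamma_ofReIm hp0, hlinear]
  simp only [Matrix.sub_mulVec, Matrix.smul_mulVec, Matrix.mulVec_smul, sub_dotProduct,
    smul_dotProduct, dotProduct_smul, smul_eq_mul, htranspose]
  field_simp
  ring

theorem stmt13 (d : ℕ) (hd : 1 ≤ d) (p q : ℝ) (hp : 1 < p) (hq : q = p / (p - 1))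
    (A : Matrix (Fin d) (Fin d) ℂ) (b c : EuclideanSpace ℂ (Fin d))
    (V : ℝ) (hV : 0 ≤ V)
    (hΓ : ∀ ξ : EuclideanSpace ℂ (Fin d), 0 ≤ Gamma p A b c V ξ) :
    ∀ α β : Fin d → ℝ,
      0 ≤ (4 / (p * q)) * dotProduct ((A.map Complex.re).mulVec α) α
          + dotProduct ((A.map Complex.re).mulVec β) β
          + 2 * dotProduct
              (((1 / p) • (A.map Complex.im) - (1 / q) • (A.map Complex.im).transpose).mulVec α) β
          + dotProduct (fun i => (b i + c i).im) β
          + 2 * dotProduct (fun i => ((1 / p : ℂ) * b i + (1 / q : ℂ) * c i).re) α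
          + V :=
  stmt13_general d p q hp hq A b c V hΓ
end
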